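/- The volume of the intersection of three pairwise perpendicular solid cylinders of radius 1, {x²+y² ≤ 1} ∩ {x²+z² ≤ 1} ∩ {y²+z² ≤ 1}, equals 16 − 8√2. -/

import Mathlib

open MeasureTheory Real Set intervalIntegral

noncomputable def g (y : ℝ) : ℝ := 4 * Real.sqrt (1 - y ^ 2) * min |y| (Real.sqrt (1 - y ^ 2))

lemma g_cont : Continuous g := by
  unfold g; fun_prop

lemma g_nonneg (y : ℝ) : 0 ≤ g y := by
  unfold g
  have h1 : (0:ℝ) ≤ 4 * Real.sqrt (1 - y ^ 2) := by positivity
  exact mul_nonneg h1 (le_min (abs_nonneg y) (Real.sqrt_nonneg _))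

lemma sq_le_set (c : ℝ) (hc : 0 ≤ c) :
    {x : ℝ | x ^ 2 ≤ c} = Icc (-Real.sqrt c) (Real.sqrt c) := by
  ext x
  simp only [mem_setOf_eq, mem_Icc, ← abs_le]
  constructor
  · intro h
    have := Real.sqrt_le_sqrt h
    rwa [Real.sqrt_sq_eq_abs] at this
  · intro h
    calc x ^ 2 = |x| ^ 2 := (sq_abs x).symm
    _ ≤ Real.sqrt c ^ 2 := by gcongr
    _ = c := Real.sq_sqrt hc

lemma volume_sq_le (c : ℝ) (hc : 0 ≤ c) :
    volume {x : ℝ | x ^ 2 ≤ c} = ENNReal.ofReal (2 * Real.sqrt c) := by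
  rw [sq_le_set c hc, Real.volume_Icc]
  congr 1; ring

lemma hs2 : Real.sqrt 2 ^ 2 = 2 := Real.sq_sqrt (by norm_num)

lemma sqrt_half : Real.sqrt (1/2) = Real.sqrt 2 / 2 := by
  rw [show (1:ℝ)/2 = (Real.sqrt 2/2)^2 by rw [div_pow, hs2]; norm_num,
    Real.sqrt_sq (by positivity)]

lemma int1 : ∫ y in (0:ℝ)..(Real.sqrt 2/2), 4 * Real.sqrt (1 - y ^ 2) * y
    = 4/3 - Real.sqrt 2/3 := by
  have hc : (0:ℝ) ≤ Real.sqrt 2/2 := by positivity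
  have key : ∀ y ∈ uIcc (0:ℝ) (Real.sqrt 2/2),
      HasDerivAt (fun t : ℝ => -(4/3) * Real.sqrt (1-t^2)^3)
        (4 * Real.sqrt (1 - y ^ 2) * y) y := by
    intro y hy
    rw [uIcc_of_le hc] at hy
    have hu : (0:ℝ) < 1 - y^2 := by nlinarith [hy.1, hy.2, hs2]
    have h1 : HasDerivAt (fun t : ℝ => 1 - t^2) (-(2*y)) y := by
      simpa using (hasDerivAt_pow 2 y).const_sub 1
    have h2 := (Real.hasDerivAt_sqrt (ne_of_gt hu)).comp y h1
    have h3 := (h2.pow 3).const_mul (-(4/3) : ℝ)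
    refine h3.congr_deriv ?_
    symm
    have hsq : Real.sqrt (1-y^2) ^ 2 = 1 - y^2 := Real.sq_sqrt hu.le
    have hpos : (0:ℝ) < Real.sqrt (1 - y^2) := Real.sqrt_pos.mpr hu
    simp only [Function.comp_apply]
    field_simp
    linear_combination (0:ℝ) * hsq
  rw [integral_eq_sub_of_hasDerivAt key (by apply Continuous.intervalIntegrable; fun_prop)]
  have h0 : (1:ℝ) - 0^2 = 1 := by norm_num
  have hc2 : 1 - (Real.sqrt 2/2)^2 = 1/2 := by rw [div_pow, hs2]; norm_num
  rw [hc2, h0, sqrt_half, Real.sqrt_one]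
  have := hs2
  linear_combination (-(Real.sqrt 2) / 6) * this

lemma int2 : ∫ y in (Real.sqrt 2/2)..(1:ℝ), 4 * (1 - y ^ 2)
    = 8/3 - 5 * Real.sqrt 2/3 := by
  have key : ∀ y ∈ uIcc (Real.sqrt 2/2) (1:ℝ),
      HasDerivAt (fun t : ℝ => 4 * (t - t^3/3)) (4 * (1 - y ^ 2)) y := by
    intro y _
    have h1 := ((hasDerivAt_id y).sub ((hasDerivAt_pow 3 y).div_const 3)).const_mul (4:ℝ)
    refine h1.congr_deriv ?_
    symm
    push_cast
    ring
  rw [integral_eq_sub_of_hasDerivAt key (by apply Continuous.intervalIntegrable; fun_prop)]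
  have := hs2
  linear_combination (Real.sqrt 2/6) * this

lemma g_eqOn1 : EqOn g (fun y => 4 * Real.sqrt (1 - y ^ 2) * y) (uIcc (0:ℝ) (Real.sqrt 2/2)) := by
  intro y hy
  rw [uIcc_of_le (by positivity)] at hy
  have h1 : y ^ 2 ≤ 1 - y ^ 2 := by nlinarith [hy.1, hy.2, hs2]
  have h2 : |y| ≤ Real.sqrt (1 - y ^ 2) := by
    rw [← Real.sqrt_sq_eq_abs]; exact Real.sqrt_le_sqrt h1
  simp only [g]
  rw [min_eq_left h2, abs_of_nonneg hy.1]

lemma g_eqOn2 : EqOn g (fun y => 4 * (1 - y ^ 2)) (uIcc (Real.sqrt 2/2) (1:ℝ)) := by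
  intro y hy
  have hc1 : Real.sqrt 2/2 ≤ 1 := by nlinarith [hs2, Real.sqrt_nonneg 2]
  rw [uIcc_of_le hc1] at hy
  have h1 : 1 - y ^ 2 ≤ y ^ 2 := by nlinarith [hy.1, hy.2, hs2, Real.sqrt_nonneg 2]
  have h2 : Real.sqrt (1 - y ^ 2) ≤ |y| := by
    rw [← Real.sqrt_sq_eq_abs]; exact Real.sqrt_le_sqrt h1
  simp only [g]
  have hnn : (0:ℝ) ≤ 1 - y ^ 2 := by nlinarith [hy.1, hy.2, Real.sqrt_nonneg 2]
  rw [min_eq_right h2, mul_assoc, Real.mul_self_sqrt hnn]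

lemma int_g_01 : ∫ y in (0:ℝ)..1, g y = 4 - 2 * Real.sqrt 2 := by
  have hi : ∀ a b : ℝ, IntervalIntegrable g volume a b :=
    fun a b => g_cont.intervalIntegrable a b
  rw [← integral_add_adjacent_intervals (hi 0 (Real.sqrt 2/2)) (hi (Real.sqrt 2/2) 1)]
  rw [integral_congr g_eqOn1, integral_congr g_eqOn2, int1, int2]
  ring

lemma g_even (y : ℝ) : g (-y) = g y := by
  simp [g, neg_sq, abs_neg]

lemma int_g : ∫ y in (-1:ℝ)..1, g y = 8 - 4 * Real.sqrt 2 := by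
  have hi : ∀ a b : ℝ, IntervalIntegrable g volume a b :=
    fun a b => g_cont.intervalIntegrable a b
  have hneg : ∫ y in (-1:ℝ)..0, g y = ∫ y in (0:ℝ)..1, g y := by
    have h := intervalIntegral.integral_comp_neg (a := (0:ℝ)) (b := 1) (f := g)
    simp only [neg_zero] at h
    simp_rw [g_even] at h
    exact h.symm
  rw [← integral_add_adjacent_intervals (hi (-1) 0) (hi 0 1), hneg, int_g_01]
  ring

lemma volume_plane : volume {q : ℝ × ℝ | q.1 ^ 2 = q.2 ^ 2} = 0 := by
  have hm : MeasurableSet {q : ℝ × ℝ | q.1 ^ 2 = q.2 ^ 2} :=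
    measurableSet_eq_fun (by fun_prop) (by fun_prop)
  rw [Measure.volume_eq_prod, Measure.prod_apply hm]
  have h : ∀ y : ℝ, volume (Prod.mk y ⁻¹' {q : ℝ × ℝ | q.1 ^ 2 = q.2 ^ 2}) = 0 := by
    intro y
    apply measure_mono_null (t := ({y, -y} : Set ℝ))
    · intro z hz
      simp only [mem_preimage, mem_setOf_eq] at hz
      have h0 : (z - y) * (z + y) = 0 := by linear_combination -hz
      rcases mul_eq_zero.mp h0 with h | h
      · exact Or.inl (by linarith)
      · exact Or.inr (by simp only [mem_singleton_iff]; linarith)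
    · exact ((Set.finite_singleton (-y)).insert y).measure_zero volume
  rw [lintegral_congr h, lintegral_zero]

lemma volume_N : volume {p : ℝ × ℝ × ℝ | p.2.1 ^ 2 = p.2.2 ^ 2} = 0 := by
  have hm : MeasurableSet {p : ℝ × ℝ × ℝ | p.2.1 ^ 2 = p.2.2 ^ 2} :=
    measurableSet_eq_fun (by fun_prop) (by fun_prop)
  rw [Measure.volume_eq_prod, Measure.prod_apply hm]
  have h : ∀ x : ℝ, volume (Prod.mk x ⁻¹' {p : ℝ × ℝ × ℝ | p.2.1 ^ 2 = p.2.2 ^ 2}) = 0 :=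
    fun x => volume_plane
  rw [lintegral_congr h, lintegral_zero]

def A : Set (ℝ × ℝ × ℝ) := {p | (p.1 ^ 2 + p.2.1 ^ 2 ≤ 1 ∧ p.1 ^ 2 + p.2.2 ^ 2 ≤ 1 ∧
    p.2.1 ^ 2 + p.2.2 ^ 2 ≤ 1) ∧ p.2.2 ^ 2 ≤ p.2.1 ^ 2}

def B : Set (ℝ × ℝ × ℝ) := {p | (p.1 ^ 2 + p.2.1 ^ 2 ≤ 1 ∧ p.1 ^ 2 + p.2.2 ^ 2 ≤ 1 ∧
    p.2.1 ^ 2 + p.2.2 ^ 2 ≤ 1) ∧ p.2.1 ^ 2 ≤ p.2.2 ^ 2}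

def D : Set (ℝ × ℝ) := {q | q.1 ^ 2 + q.2 ^ 2 ≤ 1 ∧ q.2 ^ 2 ≤ q.1 ^ 2}

lemma measurable_D : MeasurableSet D := by
  have h : D = {q : ℝ × ℝ | q.1 ^ 2 + q.2 ^ 2 ≤ 1} ∩ {q : ℝ × ℝ | q.2 ^ 2 ≤ q.1 ^ 2} := rfl
  rw [h]
  exact (measurableSet_le (by fun_prop) (by fun_prop)).inter
    (measurableSet_le (by fun_prop) (by fun_prop))

lemma measurable_A : MeasurableSet A := by
  have h : A = ({p : ℝ × ℝ × ℝ | p.1 ^ 2 + p.2.1 ^ 2 ≤ 1} ∩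
      ({p : ℝ × ℝ × ℝ | p.1 ^ 2 + p.2.2 ^ 2 ≤ 1} ∩ {p : ℝ × ℝ × ℝ | p.2.1 ^ 2 + p.2.2 ^ 2 ≤ 1})) ∩
      {p : ℝ × ℝ × ℝ | p.2.2 ^ 2 ≤ p.2.1 ^ 2} := rfl
  rw [h]
  exact ((measurableSet_le (by fun_prop) (by fun_prop)).inter
    ((measurableSet_le (by fun_prop) (by fun_prop)).inter
      (measurableSet_le (by fun_prop) (by fun_prop)))).inter
    (measurableSet_le (by fun_prop) (by fun_prop))

lemma measurable_B : MeasurableSet B := by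
  have h : B = ({p : ℝ × ℝ × ℝ | p.1 ^ 2 + p.2.1 ^ 2 ≤ 1} ∩
      ({p : ℝ × ℝ × ℝ | p.1 ^ 2 + p.2.2 ^ 2 ≤ 1} ∩ {p : ℝ × ℝ × ℝ | p.2.1 ^ 2 + p.2.2 ^ 2 ≤ 1})) ∩
      {p : ℝ × ℝ × ℝ | p.2.1 ^ 2 ≤ p.2.2 ^ 2} := rfl
  rw [h]
  exact ((measurableSet_le (by fun_prop) (by fun_prop)).inter
    ((measurableSet_le (by fun_prop) (by fun_prop)).inter
      (measurableSet_le (by fun_prop) (by fun_prop)))).inter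
    (measurableSet_le (by fun_prop) (by fun_prop))

lemma volume_A : volume A = ENNReal.ofReal (8 - 4 * Real.sqrt 2) := by
  rw [Measure.volume_eq_prod, Measure.prod_apply_symm measurable_A]
  have hfib : ∀ q : ℝ × ℝ, volume ((fun x => (x, q)) ⁻¹' A) =
      D.indicator (fun q => ENNReal.ofReal (2 * Real.sqrt (1 - q.1 ^ 2))) q := by
    intro q
    by_cases hq : q ∈ D
    · have hq' : q.1 ^ 2 + q.2 ^ 2 ≤ 1 ∧ q.2 ^ 2 ≤ q.1 ^ 2 := hq
      rw [Set.indicator_of_mem hq]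
      have hpre : (fun x => (x, q)) ⁻¹' A = {x : ℝ | x ^ 2 ≤ 1 - q.1 ^ 2} := by
        ext x
        simp only [mem_preimage, A, mem_setOf_eq]
        constructor
        · rintro ⟨⟨h1, -, -⟩, -⟩; linarith
        · intro h
          have h1 := hq'.1
          have h2 := hq'.2
          exact ⟨⟨by linarith, by linarith, h1⟩, h2⟩
      rw [hpre, volume_sq_le _ (by nlinarith [sq_nonneg q.2, hq'.1] : (0:ℝ) ≤ 1 - q.1 ^ 2)]
    · rw [Set.indicator_of_notMem hq]
      have hpre : (fun x => (x, q)) ⁻¹' A = (∅ : Set ℝ) := by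
        ext x
        simp only [mem_preimage, A, mem_setOf_eq, mem_empty_iff_false, iff_false, not_and]
        rintro ⟨-, -, h3⟩ h4
        exact hq ⟨h3, h4⟩
      rw [hpre, measure_empty]
  have hmeasf : Measurable (D.indicator fun q : ℝ × ℝ =>
      ENNReal.ofReal (2 * Real.sqrt (1 - q.1 ^ 2))) := by
    apply Measurable.indicator _ measurable_D
    exact ENNReal.measurable_ofReal.comp (by fun_prop)
  rw [lintegral_congr hfib, Measure.volume_eq_prod, lintegral_prod _ hmeasf.aemeasurable]
  have hin : ∀ y : ℝ,
      (∫⁻ z, D.indicator (fun q => ENNReal.ofReal (2 * Real.sqrt (1 - q.1 ^ 2))) (y, z)) =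
      ENNReal.ofReal ((Icc (-1:ℝ) 1).indicator g y) := by
    intro y
    have hrw : ∀ z : ℝ,
        D.indicator (fun q => ENNReal.ofReal (2 * Real.sqrt (1 - q.1 ^ 2))) (y, z) =
        {z : ℝ | z ^ 2 ≤ min (1 - y ^ 2) (y ^ 2)}.indicator
          (fun _ => ENNReal.ofReal (2 * Real.sqrt (1 - y ^ 2))) z := by
      intro z
      simp only [Set.indicator_apply, D, mem_setOf_eq, le_min_iff]
      refine if_congr ?_ rfl rfl
      constructor
      · rintro ⟨h1, h2⟩; exact ⟨by linarith, h2⟩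
      · rintro ⟨h1, h2⟩; exact ⟨by linarith, h2⟩
    rw [lintegral_congr hrw,
      lintegral_indicator_const (measurableSet_le (by fun_prop) (by fun_prop))]
    by_cases hy : y ^ 2 ≤ 1
    · have hmin : (0:ℝ) ≤ min (1 - y ^ 2) (y ^ 2) := le_min (by linarith) (sq_nonneg y)
      rw [volume_sq_le _ hmin, ← ENNReal.ofReal_mul (by positivity)]
      have hyI : y ∈ Icc (-1:ℝ) 1 := ⟨by nlinarith, by nlinarith⟩
      rw [Set.indicator_of_mem hyI]
      congr 1
      have hsqmin : Real.sqrt (min (1 - y ^ 2) (y ^ 2)) =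
          min (Real.sqrt (1 - y ^ 2)) |y| := by
        rcases le_total (1 - y ^ 2) (y ^ 2) with h | h
        · rw [min_eq_left h, min_eq_left]
          rw [← Real.sqrt_sq_eq_abs]
          exact Real.sqrt_le_sqrt h
        · rw [min_eq_right h, Real.sqrt_sq_eq_abs, min_eq_right]
          rw [← Real.sqrt_sq_eq_abs]
          exact Real.sqrt_le_sqrt h
      rw [hsqmin]
      simp only [g]
      rw [min_comm]
      ring
    · have hempty : {z : ℝ | z ^ 2 ≤ min (1 - y ^ 2) (y ^ 2)} = (∅ : Set ℝ) := by
        ext z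
        simp only [mem_setOf_eq, mem_empty_iff_false, iff_false]
        intro hz
        have h1 := min_le_left (1 - y ^ 2) (y ^ 2)
        nlinarith [sq_nonneg z]
      have hyn : y ∉ Icc (-1:ℝ) 1 := by
        intro h
        exact hy (by nlinarith [h.1, h.2])
      rw [hempty, measure_empty, mul_zero, Set.indicator_of_notMem hyn, ENNReal.ofReal_zero]
  rw [lintegral_congr hin]
  have hint : Integrable ((Icc (-1:ℝ) 1).indicator g) volume :=
    (g_cont.integrableOn_Icc).integrable_indicator measurableSet_Icc
  have hnn : 0 ≤ᵐ[volume] ((Icc (-1:ℝ) 1).indicator g) :=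
    ae_of_all _ fun y => Set.indicator_nonneg (fun t _ => g_nonneg t) y
  rw [← ofReal_integral_eq_lintegral_ofReal hint hnn]
  congr 1
  rw [MeasureTheory.integral_indicator measurableSet_Icc, MeasureTheory.integral_Icc_eq_integral_Ioc,
    ← intervalIntegral.integral_of_le (by norm_num : (-1:ℝ) ≤ 1)]
  exact int_g

/-- The tricylinder Steinmetz solid: the intersection of three pairwise perpendicular
solid cylinders of radius 1 has volume `16 − 8√2`. -/
theorem tricylinder_volume :
    volume {p : ℝ × ℝ × ℝ | p.1 ^ 2 + p.2.1 ^ 2 ≤ 1 ∧ p.1 ^ 2 + p.2.2 ^ 2 ≤ 1 ∧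
        p.2.1 ^ 2 + p.2.2 ^ 2 ≤ 1} =
      ENNReal.ofReal (16 - 8 * Real.sqrt 2) := by
  have hswap : MeasurePreserving (fun p : ℝ × ℝ × ℝ => (p.1, p.2.2, p.2.1))
      volume volume := by
    have h1 : MeasurePreserving (Prod.swap : ℝ × ℝ → ℝ × ℝ) volume volume := by
      rw [Measure.volume_eq_prod]
      exact Measure.measurePreserving_swap
    have h2 := (MeasurePreserving.id (volume : Measure ℝ)).prod h1
    rw [← Measure.volume_eq_prod] at h2
    exact h2
  have hBA : (fun p : ℝ × ℝ × ℝ => (p.1, p.2.2, p.2.1)) ⁻¹' B = A := by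
    ext p
    simp only [mem_preimage, A, B, mem_setOf_eq]
    constructor
    · rintro ⟨⟨h1, h2, h3⟩, h4⟩
      exact ⟨⟨h2, h1, by linarith⟩, h4⟩
    · rintro ⟨⟨h1, h2, h3⟩, h4⟩
      exact ⟨⟨h2, h1, by linarith⟩, h4⟩
  have hvB : volume B = ENNReal.ofReal (8 - 4 * Real.sqrt 2) := by
    rw [← hswap.measure_preimage measurable_B.nullMeasurableSet, hBA, volume_A]
  have hU : {p : ℝ × ℝ × ℝ | p.1 ^ 2 + p.2.1 ^ 2 ≤ 1 ∧ p.1 ^ 2 + p.2.2 ^ 2 ≤ 1 ∧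
      p.2.1 ^ 2 + p.2.2 ^ 2 ≤ 1} = A ∪ B := by
    ext p
    simp only [mem_setOf_eq, mem_union, A, B]
    constructor
    · intro h
      rcases le_total (p.2.2 ^ 2) (p.2.1 ^ 2) with hc | hc
      · exact Or.inl ⟨h, hc⟩
      · exact Or.inr ⟨h, hc⟩
    · rintro (⟨h, -⟩ | ⟨h, -⟩) <;> exact h
  have h0 : volume (A ∩ B) = 0 := by
    apply measure_mono_null _ volume_N
    rintro p ⟨hpA, hpB⟩
    exact le_antisymm hpB.2 hpA.2
  rw [hU]
  have hsum : volume (A ∪ B) = volume A + volume B := by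
    have h := measure_union_add_inter (μ := volume) A measurable_B
    rw [h0, add_zero] at h
    exact h
  have hle : Real.sqrt 2 ≤ 2 := by nlinarith [hs2, Real.sqrt_nonneg 2]
  rw [hsum, volume_A, hvB, ← ENNReal.ofReal_add (by nlinarith) (by nlinarith)]
  congr 1
  ring
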